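/- Suppose (X,d) is a metric space and F⊂C(X) is a family such that F^n is pointwise equicontinuous for each n∈ℕ. Then for any ε>0 there exists a metric d_ε on X, topologically equivalent to d, such that every f∈F is (1+ε)-Lipschitz with respect to d_ε. -/

import Mathlib

/-! With `r = (1 + ε)⁻¹` put `ρ(x, y) = Σₙ rⁿ Dₙ(x, y)`, where `Dₙ(x, y)` is the supremum of
`min (d(g x, g y)) 1` over `g ∈ Fⁿ`. Since `g ∘ f ∈ Fⁿ⁺¹` for `g ∈ Fⁿ` and `f ∈ F`, we have
`Dₙ(f x, f y) ≤ Dₙ₊₁(x, y)`, and shifting the series gives `ρ(f x, f y) ≤ r⁻¹ ρ(x, y)`.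
The term `D₀ = min d 1` bounds `d` locally by `ρ`; conversely pointwise equicontinuity of `Fⁿ`
makes each term `Dₙ(x, ·)` tend to `0` at `x`, and so does `ρ(x, ·)` by dominated convergence
(`Dₙ ≤ 1`). Hence `ρ` induces the topology of `d`. -/

open Metric Filter Topology

variable {X : Type*}

/-- A family `F` of selfmaps is uniformly equicontinuous. -/
def UnifEquicont [MetricSpace X] (F : Set (X → X)) : Prop :=
  ∀ ε : ℝ, 0 < ε → ∃ δ : ℝ, 0 < δ ∧ ∀ x y : X, dist x y < δ → ∀ f ∈ F, dist (f x) (f y) < ε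

/-- A family `F` of selfmaps is pointwise equicontinuous. -/
def PtEquicont [MetricSpace X] (F : Set (X → X)) : Prop :=
  ∀ x : X, ∀ ε : ℝ, 0 < ε →
    ∃ δ : ℝ, 0 < δ ∧ ∀ y : X, dist x y < δ → ∀ f ∈ F, dist (f x) (f y) < ε

/-- `famPow F n` is the family `F^n` of `n`-fold compositions of members of `F`. -/
def famPow (F : Set (X → X)) : ℕ → Set (X → X)
  | 0 => {id}
  | n + 1 => {h | ∃ f ∈ F, ∃ g ∈ famPow F n, h = f ∘ g}

/-- The metric `ρ(x,y) = d(x,y) + Σₙ sup{d(f x, f y) : f ∈ F^n}/(1+ε)^n`. -/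
noncomputable def rho [MetricSpace X] (F : Set (X → X)) (ε : ℝ) (x y : X) : ℝ :=
  dist x y + ∑' n : ℕ, (⨆ f ∈ famPow F (n + 1), dist (f x) (f y)) / (1 + ε) ^ (n + 1)

/-- `ρ` is a metric on `X`. -/
def IsMetric (ρ : X → X → ℝ) : Prop :=
  (∀ x, ρ x x = 0) ∧ (∀ x y, ρ x y = 0 → x = y) ∧ (∀ x y, ρ x y = ρ y x) ∧
    (∀ x y z, ρ x z ≤ ρ x y + ρ y z)

theorem min_one_le_min_one_add_min_one {a b c : ℝ} (hb : 0 ≤ b) (hc : 0 ≤ c) (habc : a ≤ b + c) :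
    min a 1 ≤ min b 1 + min c 1 := by
  rcases le_total b 1 with hb1 | hb1 <;> rcases le_total c 1 with hc1 | hc1 <;>
    simp only [min_eq_left, min_eq_right, hb1, hc1] <;>
    linarith [min_le_left a 1, min_le_right a 1]

theorem comp_mem_famPow_succ {F : Set (X → X)} {f g : X → X} {n : ℕ}
    (hg : g ∈ famPow F n) (hf : f ∈ F) : g ∘ f ∈ famPow F (n + 1) := by
  induction n generalizing g with
  | zero => obtain rfl : g = id := hg; exact ⟨f, hf, id, rfl, rfl⟩
  | succ n ih =>
    obtain ⟨f', hf', g', hg', rfl⟩ := hg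
    exact ⟨f', hf', g' ∘ f, ih hg', rfl⟩

theorem ptEquicont_famPow_zero [MetricSpace X] (F : Set (X → X)) : PtEquicont (famPow F 0) := by
  rintro x η hη
  refine ⟨η, hη, fun y hy f hf => ?_⟩
  obtain rfl : f = id := hf
  exact hy

theorem isOpen_iff_of_min_dist_le_of_tendsto [PseudoMetricSpace X] {ρ : X → X → ℝ}
    (hle : ∀ x y, min (dist x y) 1 ≤ ρ x y) (hρ : ∀ x, Tendsto (ρ x) (𝓝 x) (𝓝 0)) (s : Set X) :
    IsOpen s ↔ ∀ x ∈ s, ∃ ε > 0, ∀ y, ρ x y < ε → y ∈ s := by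
  rw [Metric.isOpen_iff]
  refine forall₂_congr fun x _ => ⟨fun ⟨δ, hδ, hball⟩ => ?_, fun ⟨ε, hε, hρs⟩ => ?_⟩
  · refine ⟨min δ 1, lt_min hδ one_pos, fun y hy => hball ?_⟩
    have hmin := (hle x y).trans_lt hy
    exact mem_ball'.2 (lt_of_not_ge fun h => hmin.not_ge (min_le_min_right 1 h))
  · obtain ⟨δ, hδ, hδρ⟩ := Metric.eventually_nhds_iff.1 ((hρ x).eventually (gt_mem_nhds hε))
    exact ⟨δ, hδ, fun y hy => hρs y (hδρ hy)⟩

section TruncSupDist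

variable [PseudoMetricSpace X] {G : Set (X → X)}

noncomputable def truncSupDist (G : Set (X → X)) (x y : X) : ℝ :=
  ⨆ g : G, min (dist (g.1 x) (g.1 y)) 1

theorem truncSupDist_nonneg (x y : X) : 0 ≤ truncSupDist G x y :=
  Real.iSup_nonneg fun _ => le_min dist_nonneg zero_le_one

theorem truncSupDist_le {x y : X} {c : ℝ} (hc : 0 ≤ c)
    (h : ∀ g ∈ G, min (dist (g x) (g y)) 1 ≤ c) : truncSupDist G x y ≤ c :=
  Real.iSup_le (fun g => h g.1 g.2) hc

theorem truncSupDist_le_one (x y : X) : truncSupDist G x y ≤ 1 :=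
  truncSupDist_le zero_le_one fun _ _ => min_le_right _ _

theorem min_dist_le_truncSupDist {g : X → X} (hg : g ∈ G) (x y : X) :
    min (dist (g x) (g y)) 1 ≤ truncSupDist G x y :=
  le_ciSup (f := fun g : G => min (dist (g.1 x) (g.1 y)) 1)
    ⟨1, Set.forall_mem_range.2 fun _ => min_le_right _ _⟩ ⟨g, hg⟩

theorem truncSupDist_self (x : X) : truncSupDist G x x = 0 :=
  le_antisymm (truncSupDist_le le_rfl fun _ _ => by simp) (truncSupDist_nonneg x x)

theorem truncSupDist_comm (x y : X) : truncSupDist G x y = truncSupDist G y x := by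
  simp only [truncSupDist, dist_comm]

theorem truncSupDist_triangle (x y z : X) :
    truncSupDist G x z ≤ truncSupDist G x y + truncSupDist G y z :=
  truncSupDist_le (add_nonneg (truncSupDist_nonneg x y) (truncSupDist_nonneg y z)) fun _ hg =>
    (min_one_le_min_one_add_min_one dist_nonneg dist_nonneg (dist_triangle _ _ _)).trans
      (add_le_add (min_dist_le_truncSupDist hg x y) (min_dist_le_truncSupDist hg y z))

theorem truncSupDist_famPow_comp_le {F : Set (X → X)} {f : X → X} (hf : f ∈ F) (n : ℕ)
    (x y : X) : truncSupDist (famPow F n) (f x) (f y) ≤ truncSupDist (famPow F (n + 1)) x y :=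
  truncSupDist_le (truncSupDist_nonneg x y) fun _ hg =>
    min_dist_le_truncSupDist (comp_mem_famPow_succ hg hf) x y

end TruncSupDist

theorem PtEquicont.tendsto_truncSupDist [MetricSpace X] {G : Set (X → X)} (hG : PtEquicont G)
    (x : X) : Tendsto (truncSupDist G x) (𝓝 x) (𝓝 0) := by
  refine Metric.tendsto_nhds.2 fun η hη => ?_
  obtain ⟨δ, hδ, hGδ⟩ := hG x (η / 2) (half_pos hη)
  refine Metric.eventually_nhds_iff.2 ⟨δ, hδ, fun y hy => ?_⟩
  have hle : truncSupDist G x y ≤ η / 2 := truncSupDist_le (half_pos hη).le fun g hg =>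
    (min_le_left _ _).trans (hGδ y (by rwa [dist_comm]) g hg).le
  rw [Real.dist_0_eq_abs, abs_of_nonneg (truncSupDist_nonneg x y)]
  linarith

section WeightedDist

variable [PseudoMetricSpace X] {F : Set (X → X)} {r : ℝ}

/-- The paper's `ρ` (cf. `rho`) with `r = (1 + ε)⁻¹`, but with every supremum truncated at `1`, so
that the series converges without any boundedness assumption on `F`. -/
noncomputable def weightedDist (F : Set (X → X)) (r : ℝ) (x y : X) : ℝ :=
  ∑' n : ℕ, r ^ n * truncSupDist (famPow F n) x y

theorem summable_weightedDist (hr0 : 0 ≤ r) (hr1 : r < 1) (x y : X) :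
    Summable fun n => r ^ n * truncSupDist (famPow F n) x y :=
  (summable_geometric_of_lt_one hr0 hr1).of_nonneg_of_le
    (fun n => mul_nonneg (pow_nonneg hr0 n) (truncSupDist_nonneg x y))
    (fun n => mul_le_of_le_one_right (pow_nonneg hr0 n) (truncSupDist_le_one x y))

theorem weightedDist_self (x : X) : weightedDist F r x x = 0 := by
  simp [weightedDist, truncSupDist_self]

theorem weightedDist_comm (x y : X) : weightedDist F r x y = weightedDist F r y x := by
  simp only [weightedDist, truncSupDist_comm x y]

theorem weightedDist_triangle (hr0 : 0 ≤ r) (hr1 : r < 1) (x y z : X) :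
    weightedDist F r x z ≤ weightedDist F r x y + weightedDist F r y z := by
  rw [weightedDist, weightedDist, weightedDist,
    ← (summable_weightedDist hr0 hr1 x y).tsum_add (summable_weightedDist hr0 hr1 y z)]
  refine (summable_weightedDist hr0 hr1 x z).tsum_le_tsum (fun n => ?_)
    ((summable_weightedDist hr0 hr1 x y).add (summable_weightedDist hr0 hr1 y z))
  rw [← mul_add]
  exact mul_le_mul_of_nonneg_left (truncSupDist_triangle x y z) (pow_nonneg hr0 n)

theorem weightedDist_eq_add_tsum_succ (hr0 : 0 ≤ r) (hr1 : r < 1) (x y : X) :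
    weightedDist F r x y = truncSupDist (famPow F 0) x y +
      ∑' n : ℕ, r ^ (n + 1) * truncSupDist (famPow F (n + 1)) x y := by
  rw [weightedDist, (summable_weightedDist hr0 hr1 x y).tsum_eq_zero_add, pow_zero, one_mul]

theorem min_dist_le_weightedDist (hr0 : 0 ≤ r) (hr1 : r < 1) (x y : X) :
    min (dist x y) 1 ≤ weightedDist F r x y := by
  rw [weightedDist_eq_add_tsum_succ hr0 hr1]
  have htail : 0 ≤ ∑' n : ℕ, r ^ (n + 1) * truncSupDist (famPow F (n + 1)) x y :=
    tsum_nonneg fun n => mul_nonneg (pow_nonneg hr0 _) (truncSupDist_nonneg x y)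
  have hzero : min (dist x y) 1 ≤ truncSupDist (famPow F 0) x y :=
    min_dist_le_truncSupDist (G := famPow F 0) (g := id) rfl x y
  linarith

theorem weightedDist_comp_le (hr0 : 0 < r) (hr1 : r < 1) {f : X → X} (hf : f ∈ F) (x y : X) :
    weightedDist F r (f x) (f y) ≤ r⁻¹ * weightedDist F r x y := by
  have hsucc : Summable fun n => r ^ (n + 1) * truncSupDist (famPow F (n + 1)) x y :=
    (summable_nat_add_iff 1).2 (summable_weightedDist hr0.le hr1 x y)
  calc weightedDist F r (f x) (f y)
      ≤ ∑' n : ℕ, r⁻¹ * (r ^ (n + 1) * truncSupDist (famPow F (n + 1)) x y) := by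
        refine (summable_weightedDist hr0.le hr1 _ _).tsum_le_tsum (fun n => ?_) (hsucc.mul_left _)
        rw [pow_succ, ← mul_assoc, mul_comm _ r, ← mul_assoc, inv_mul_cancel₀ hr0.ne', one_mul]
        exact mul_le_mul_of_nonneg_left (truncSupDist_famPow_comp_le hf n x y) (pow_nonneg hr0.le n)
    _ = r⁻¹ * ∑' n : ℕ, r ^ (n + 1) * truncSupDist (famPow F (n + 1)) x y := tsum_mul_left
    _ ≤ r⁻¹ * weightedDist F r x y := by
        rw [weightedDist_eq_add_tsum_succ hr0.le hr1 x y]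
        exact mul_le_mul_of_nonneg_left (le_add_of_nonneg_left (truncSupDist_nonneg x y))
          (inv_nonneg.2 hr0.le)

end WeightedDist

theorem tendsto_weightedDist [MetricSpace X] {F : Set (X → X)} {r : ℝ} (hr0 : 0 ≤ r) (hr1 : r < 1)
    (hF : ∀ n : ℕ, 0 < n → PtEquicont (famPow F n)) (x : X) :
    Tendsto (weightedDist F r x) (𝓝 x) (𝓝 0) := by
  have hterm (n : ℕ) : Tendsto (truncSupDist (famPow F n) x) (𝓝 x) (𝓝 0) := by
    rcases n.eq_zero_or_pos with rfl | hn
    · exact (ptEquicont_famPow_zero F).tendsto_truncSupDist x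
    · exact (hF n hn).tendsto_truncSupDist x
  show Tendsto (fun y => ∑' n : ℕ, r ^ n * truncSupDist (famPow F n) x y) (𝓝 x) (𝓝 0)
  simpa using tendsto_tsum_of_dominated_convergence (summable_geometric_of_lt_one hr0 hr1)
    (fun n => (hterm n).const_mul (r ^ n)) (Eventually.of_forall fun y n => by
      rw [Real.norm_of_nonneg (mul_nonneg (pow_nonneg hr0 n) (truncSupDist_nonneg x y))]
      exact mul_le_of_le_one_right (pow_nonneg hr0 n) (truncSupDist_le_one x y))

/-- Its topology is definitionally the topology of `X`. -/
noncomputable abbrev weightedMetricSpace [MetricSpace X] (F : Set (X → X)) {r : ℝ} (hr0 : 0 ≤ r)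
    (hr1 : r < 1) (hF : ∀ n : ℕ, 0 < n → PtEquicont (famPow F n)) : MetricSpace X :=
  MetricSpace.ofDistTopology (weightedDist F r) weightedDist_self weightedDist_comm
    (weightedDist_triangle hr0 hr1)
    (isOpen_iff_of_min_dist_le_of_tendsto (min_dist_le_weightedDist hr0 hr1)
      (tendsto_weightedDist hr0 hr1 hF))
    fun x y h => by
      have hmin := min_dist_le_weightedDist (F := F) hr0 hr1 x y
      rw [h] at hmin
      exact eq_of_dist_eq_zero <|
        le_antisymm ((min_le_iff.1 hmin).resolve_right (by norm_num)) dist_nonneg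

theorem exists_equiv_metric_lipschitz_general [MetricSpace X] (F : Set (X → X)) (ε : ℝ)
    (hF : ∀ n : ℕ, 0 < n → PtEquicont (famPow F n)) (hε : 0 < ε) :
    ∃ m' : MetricSpace X,
      m'.toUniformSpace.toTopologicalSpace = (inferInstance : TopologicalSpace X) ∧
        ∀ f ∈ F, ∀ x y : X, m'.dist (f x) (f y) ≤ (1 + ε) * m'.dist x y := by
  have hr0 : 0 < (1 + ε)⁻¹ := inv_pos.2 (by linarith)
  have hr1 : (1 + ε)⁻¹ < 1 := inv_lt_one_of_one_lt₀ (by linarith)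
  refine ⟨weightedMetricSpace F hr0.le hr1 hF, rfl, fun f hf x y => ?_⟩
  have hlip := weightedDist_comp_le hr0 hr1 hf x y
  rwa [inv_inv] at hlip

theorem exists_equiv_metric_lipschitz [MetricSpace X] (F : Set (X → X)) (ε : ℝ)
    (hFc : ∀ f ∈ F, Continuous f)
    (hF : ∀ n : ℕ, 0 < n → PtEquicont (famPow F n)) (hε : 0 < ε) :
    ∃ m' : MetricSpace X,
      m'.toUniformSpace.toTopologicalSpace = (inferInstance : TopologicalSpace X) ∧
        ∀ f ∈ F, ∀ x y : X, m'.dist (f x) (f y) ≤ (1 + ε) * m'.dist x y :=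
  exists_equiv_metric_lipschitz_general F ε hF hε
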